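/- Let ρ′ be a real-valued polynomial on ℂ² with bidegree decomposition ρ′ = Σ_{p,q} ρ′_{p,q}, where ρ′_{p,q} is homogeneous of bidegree (p,q) and ρ′_{q,p} = conj(ρ′_{p,q}). Assume Q⁰(ρ′_{p,q}) = 0 for every (p,q) with p ≥ 2 and q ≥ p + 4. Suppose Z₀ = (z₀,w₀) with |z₀|² + |w₀|² = 1 is such that the loop g(t) := Q⁰(ρ′)(e^{it}Z₀), t ∈ [0,2π], never vanishes. Then the winding number of g about 0 is strictly positive. -/

import Mathlib

noncomputable section

open Complex Matrix Set

/-- Wirtinger derivative `∂/∂z` (first coordinate) of `f : ℂ × ℂ → ℂ`. -/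
def wdz (f : ℂ × ℂ → ℂ) (p : ℂ × ℂ) : ℂ :=
  (fderiv ℝ f p (1, 0) - Complex.I * fderiv ℝ f p (Complex.I, 0)) / 2

/-- Wirtinger derivative `∂/∂z̄` (first coordinate). -/
def wdzb (f : ℂ × ℂ → ℂ) (p : ℂ × ℂ) : ℂ :=
  (fderiv ℝ f p (1, 0) + Complex.I * fderiv ℝ f p (Complex.I, 0)) / 2

/-- Wirtinger derivative `∂/∂w` (second coordinate). -/
def wdw (f : ℂ × ℂ → ℂ) (p : ℂ × ℂ) : ℂ :=
  (fderiv ℝ f p (0, 1) - Complex.I * fderiv ℝ f p (0, Complex.I)) / 2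

/-- Wirtinger derivative `∂/∂w̄` (second coordinate). -/
def wdwb (f : ℂ × ℂ → ℂ) (p : ℂ × ℂ) : ℂ :=
  (fderiv ℝ f p (0, 1) + Complex.I * fderiv ℝ f p (0, Complex.I)) / 2

/-- The operator `L := -ρ_w ∂_z + ρ_z ∂_w` associated with `ρ`. -/
def Lop (ρ f : ℂ × ℂ → ℂ) : ℂ × ℂ → ℂ :=
  fun p => -(wdw ρ p) * wdz f p + wdz ρ p * wdw f p

/-- The operator `L̄ := -ρ_w̄ ∂_z̄ + ρ_z̄ ∂_w̄` associated with `ρ`. -/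
def Lbar (ρ f : ℂ × ℂ → ℂ) : ℂ × ℂ → ℂ :=
  fun p => -(wdwb ρ p) * wdzb f p + wdzb ρ p * wdwb f p

/-- The function `ρ_{Z²}(L,L) = ρ_zz ρ_w² - 2 ρ_zw ρ_z ρ_w + ρ_ww ρ_z²`. -/
def rhoZ2LL (ρ : ℂ × ℂ → ℂ) : ℂ × ℂ → ℂ :=
  fun p => wdz (wdz ρ) p * (wdw ρ p) ^ 2
    - 2 * wdw (wdz ρ) p * wdz ρ p * wdw ρ p
    + wdw (wdw ρ) p * (wdz ρ p) ^ 2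

/-- The row functions of the matrix `A_n(ρ)`: for `i ≤ n` the monomial `ρ_z^i ρ_w^{n-i}`,
and for `i = n + 1 + s` (with `0 ≤ s ≤ n - 3`) the function `ρ_z^s ρ_w^{n-3-s} ρ_{Z²}(L,L)`. -/
def rowA (ρ : ℂ × ℂ → ℂ) (n i : ℕ) : ℂ × ℂ → ℂ :=
  if i ≤ n then fun p => (wdz ρ p) ^ i * (wdw ρ p) ^ (n - i)
  else fun p => (wdz ρ p) ^ (i - (n + 1)) * (wdw ρ p) ^ (n - 3 - (i - (n + 1))) * rhoZ2LL ρ p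

/-- The `(2n-1) × (2n-1)` matrix `A_n(ρ)` at the point `p`; the `(i,j)` entry is
`L̄^j` applied to the `i`-th row function, evaluated at `p`. -/
def matA (ρ : ℂ × ℂ → ℂ) (n : ℕ) (p : ℂ × ℂ) :
    Matrix (Fin (2 * n - 1)) (Fin (2 * n - 1)) ℂ :=
  fun i j => (Lbar ρ)^[(j : ℕ)] (rowA ρ n (i : ℕ)) p

/-- The `(n+1) × (n+1)` matrix `D_n(ρ) = (L̄^j (ρ_z^k ρ_w^{n-k}))_{0 ≤ j,k ≤ n}` at `p`. -/
def matD (ρ : ℂ × ℂ → ℂ) (n : ℕ) (p : ℂ × ℂ) : Matrix (Fin (n + 1)) (Fin (n + 1)) ℂ :=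
  fun k j => (Lbar ρ)^[(j : ℕ)] (fun q => (wdz ρ q) ^ (k : ℕ) * (wdw ρ q) ^ (n - (k : ℕ))) p

/-- The determinant of the complex Jacobian matrix of a map `H : ℂ² → ℂ²`
(computed via Wirtinger derivatives of the two components). -/
def detJac (H : ℂ × ℂ → ℂ × ℂ) (p : ℂ × ℂ) : ℂ :=
  wdz (fun q => (H q).1) p * wdw (fun q => (H q).2) p
    - wdw (fun q => (H q).1) p * wdz (fun q => (H q).2) p

/-- The operator `L̄₀ := -w ∂_z̄ + z ∂_w̄` (the operator `L̄` of the sphere). -/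
def Lbar0 (f : ℂ × ℂ → ℂ) : ℂ × ℂ → ℂ :=
  fun p => -p.2 * wdzb f p + p.1 * wdwb f p

/-- `Q⁰(R) := L̄₀⁴ ( w̄² R_zz - 2 z̄ w̄ R_zw + z̄² R_ww )`. -/
def Q0 (R : ℂ × ℂ → ℂ) : ℂ × ℂ → ℂ :=
  Lbar0^[4] (fun p => (starRingEnd ℂ p.2) ^ 2 * wdz (wdz R) p
    - 2 * starRingEnd ℂ p.1 * starRingEnd ℂ p.2 * wdw (wdz R) p
    + (starRingEnd ℂ p.1) ^ 2 * wdw (wdw R) p)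

/-- `R` is a homogeneous polynomial of bidegree `(p, q)` on `ℂ²`: a linear combination of
the monomials `z^{α₁} w^{α₂} z̄^{β₁} w̄^{β₂}` with `α₁ + α₂ = p` and `β₁ + β₂ = q`. -/
def IsBihom (R : ℂ × ℂ → ℂ) (p q : ℕ) : Prop :=
  ∃ c : Fin (p + 1) → Fin (q + 1) → ℂ, ∀ z w : ℂ,
    R (z, w) = ∑ a : Fin (p + 1), ∑ b : Fin (q + 1),
      c a b * z ^ (a : ℕ) * w ^ (p - (a : ℕ)) *
        (starRingEnd ℂ z) ^ (b : ℕ) * (starRingEnd ℂ w) ^ (q - (b : ℕ))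

/-- The winding number about `0` of the loop `γ : [0, 2π] → ℂ ∖ {0}`:
`W(γ) = (1/(2πi)) ∫₀^{2π} γ'(t)/γ(t) dt`. -/
def winding (γ : ℝ → ℂ) : ℂ :=
  (1 / (2 * (Real.pi : ℂ) * Complex.I)) * ∫ t in (0 : ℝ)..(2 * Real.pi), deriv γ t / γ t

/-!
For a polynomial `R` of bidegree `(p, q)` the rotation `Z ↦ e^{it} Z` multiplies `R` by
`e^{i(p-q)t}`. In this weight `∂_z, ∂_w` and the factors `z̄, w̄` count `-1`, while `∂_z̄, ∂_w̄`
and `z, w` count `+1`, so `Q⁰` raises it by `4`: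
`Q⁰(ρ'_{p,q})(e^{it} Z₀) = e^{i(p-q+4)t} Q⁰(ρ'_{p,q})(Z₀)`. Moreover `Q⁰(ρ'_{p,q}) = 0` whenever
`q ≥ p + 4`: for `p ≥ 2` by hypothesis, for `p ≤ 1` because `Q⁰` only involves second derivatives
in `z, w`. Hence `Q⁰(ρ')(e^{it} Z₀) = F(e^{it})` for a polynomial `F` with `F(0) = 0`, and by the
argument principle the winding number is the number of zeros of `F` in the unit disc, and `0` is
one of them.
-/

theorem Finset.prod_zpow_eq_zpow_sum₀ {G₀ ι : Type*} [CommGroupWithZero G₀] {e : G₀}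
    (he : e ≠ 0) (s : Finset ι) (f : ι → ℤ) : ∏ i ∈ s, e ^ f i = e ^ ∑ i ∈ s, f i := by
  induction s using Finset.cons_induction with
  | empty => simp
  | cons a s ha ih => rw [Finset.prod_cons, Finset.sum_cons, ih, zpow_add₀ he]

namespace MvPolynomial

theorem hasFDerivAt_eval_comp {𝕜 𝔸 E σ : Type*} [NontriviallyNormedField 𝕜]
    [NormedField 𝔸] [NormedAlgebra 𝕜 𝔸] [NormedAddCommGroup E] [NormedSpace 𝕜 E] [Fintype σ]
    (P : MvPolynomial σ 𝔸) (u : σ → E →L[𝕜] 𝔸) (x : E) :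
    HasFDerivAt (fun y => eval (fun i => u i y) P)
      (∑ i, eval (fun i => u i x) (pderiv i P) • u i) x := by
  classical
  induction P using MvPolynomial.induction_on with
  | C a =>
    simp only [eval_C]
    refine (hasFDerivAt_const a x).congr_fderiv ?_
    ext v
    simp
  | add P Q hP hQ =>
    simp only [map_add]
    refine (hP.add hQ).congr_fderiv ?_
    ext v
    simp [add_mul, Finset.sum_add_distrib]
  | mul_X P i hP =>
    simp only [map_mul, eval_X]
    refine (hP.mul (u i).hasFDerivAt).congr_fderiv ?_
    ext v
    simp [Pi.single_apply, Finset.mul_sum, apply_ite, add_mul, Finset.sum_add_distrib, ite_mul,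
      mul_assoc]

theorem IsWeightedHomogeneous.eq_zero_of_neg {R σ : Type*} [CommSemiring R] {w : σ → ℤ}
    {φ : MvPolynomial σ R} {m : ℤ} (h : IsWeightedHomogeneous w φ m) (hw : ∀ i, 0 ≤ w i)
    (hm : m < 0) : φ = 0 := by
  ext d
  by_contra hd
  rw [← h hd, Finsupp.weight_apply] at hm
  exact hm.not_ge (Finsupp.sum_nonneg fun i _ => smul_nonneg (Nat.cast_nonneg _) (hw i))

theorem IsWeightedHomogeneous.eval_zpow_mul {K σ : Type*} [Field K] [Fintype σ] {w : σ → ℤ}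
    {φ : MvPolynomial σ K} {m : ℤ} (h : IsWeightedHomogeneous w φ m) {e : K} (he : e ≠ 0)
    (x : σ → K) : eval (fun i => e ^ w i * x i) φ = e ^ m * eval x φ := by
  rw [eval_eq', eval_eq', Finset.mul_sum]
  refine Finset.sum_congr rfl fun d hd => ?_
  have hwd := h (mem_support_iff.1 hd)
  rw [Finsupp.weight_eq_sum] at hwd
  simp_rw [mul_pow, Finset.prod_mul_distrib, ← zpow_natCast (e ^ w _), ← _root_.zpow_mul,
    Finset.prod_zpow_eq_zpow_sum₀ he, ← hwd, nsmul_eq_mul, mul_comm (w _)]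
  ring

end MvPolynomial

section ArgumentPrinciple

open Metric Polynomial

theorem circleIntegral_sub_inv_of_notMem_closedBall {c w : ℂ} {R : ℝ} (hR : 0 ≤ R)
    (hw : w ∉ closedBall c R) : ∮ z in C(c, R), (z - w)⁻¹ = 0 := by
  refine DiffContOnCl.circleIntegral_eq_zero hR (DifferentiableOn.diffContOnCl ?_)
  refine (differentiableOn_id.sub_const w).inv fun z hz h => hw ?_
  rw [← sub_eq_zero.1 h]
  exact closure_ball_subset_closedBall hz

theorem continuousOn_sub_inv_sphere {c w : ℂ} {R : ℝ} (hw : w ∉ sphere c R) :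
    ContinuousOn (fun z => (z - w)⁻¹) (sphere c R) :=
  ContinuousOn.inv₀ (f := fun z => z - w) (by fun_prop) fun z hz h =>
    hw (by rwa [← sub_eq_zero.1 h])

open scoped Classical in
theorem circleIntegral_multiset_sum_sub_inv {c : ℂ} {R : ℝ} (hR : 0 ≤ R) (s : Multiset ℂ)
    (hs : ∀ w ∈ s, w ∉ sphere c R) :
    ∮ z in C(c, R), (s.map fun w => (z - w)⁻¹).sum
      = 2 * Real.pi * I * (s.filter (· ∈ ball c R)).card := by
  induction s using Multiset.induction_on with
  | empty => simp [circleIntegral]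
  | cons w s ih =>
    rw [Multiset.forall_mem_cons] at hs
    simp only [Multiset.map_cons, Multiset.sum_cons]
    rw [circleIntegral.integral_add ((continuousOn_sub_inv_sphere hs.1).circleIntegrable hR)
      ((continuousOn_multiset_sum _ fun w hw =>
        continuousOn_sub_inv_sphere (hs.2 w hw)).circleIntegrable hR),
      ih hs.2, Multiset.filter_cons]
    by_cases hwb : w ∈ ball c R
    · rw [circleIntegral.integral_sub_inv_of_mem_ball hwb]
      simp only [hwb, if_true, Multiset.singleton_add, Multiset.card_cons, Nat.cast_add,
        Nat.cast_one]
      ring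
    · have hwc : w ∉ closedBall c R := fun h =>
        hs.1 (mem_sphere.2 (le_antisymm (mem_closedBall.1 h) (not_lt.1 hwb)))
      rw [circleIntegral_sub_inv_of_notMem_closedBall hR hwc]
      simp [hwb]

open scoped Classical in
theorem Polynomial.circleIntegral_derivative_div_eval {c : ℂ} {R : ℝ} (hR : 0 ≤ R) (P : ℂ[X])
    (hP : ∀ z ∈ sphere c R, P.eval z ≠ 0) :
    ∮ z in C(c, R), P.derivative.eval z / P.eval z
      = 2 * Real.pi * I * (P.roots.filter (· ∈ ball c R)).card := by
  have hroots : ∀ w ∈ P.roots, w ∉ sphere c R := fun w hw hws =>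
    hP w hws (isRoot_of_mem_roots hw)
  rw [← circleIntegral_multiset_sum_sub_inv hR _ hroots]
  refine circleIntegral.integral_congr hR fun z hz => ?_
  simpa only [one_div] using (IsAlgClosed.splits P).eval_derivative_div_eval_of_ne_zero (hP z hz)

theorem Polynomial.hasDerivAt_eval_exp_I_mul (P : ℂ[X]) (t : ℝ) :
    HasDerivAt (fun s : ℝ => P.eval (exp (I * s)))
      (P.derivative.eval (exp (I * t)) * (exp (I * t) * I)) t := by
  have h : HasDerivAt (fun z : ℂ => exp (I * z)) (exp (I * t) * I) t := by
    simpa using ((hasDerivAt_id (t : ℂ)).const_mul I).cexp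
  exact ((P.hasDerivAt _).comp (t : ℂ) h).comp_ofReal

open scoped Classical in
theorem winding_eval_exp_I_mul (P : ℂ[X]) (hP : ∀ t : ℝ, P.eval (exp (I * t)) ≠ 0) :
    winding (fun t : ℝ => P.eval (exp (I * t))) = (P.roots.filter (· ∈ ball 0 1)).card := by
  have hsphere : ∀ z ∈ sphere (0 : ℂ) 1, P.eval z ≠ 0 := by
    intro z hz
    have hz1 : ‖z‖ = 1 := by simpa using hz
    have hexp := norm_mul_exp_arg_mul_I z
    rw [hz1, ofReal_one, one_mul, mul_comm] at hexp
    exact hexp ▸ hP z.arg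
  have hint : ∫ t in (0 : ℝ)..(2 * Real.pi),
      deriv (fun t : ℝ => P.eval (exp (I * t))) t / P.eval (exp (I * t))
        = ∮ z in C(0, 1), P.derivative.eval z / P.eval z := by
    refine intervalIntegral.integral_congr fun t _ => ?_
    simp only [(P.hasDerivAt_eval_exp_I_mul t).deriv, deriv_circleMap, circleMap_zero, ofReal_one,
      one_mul, smul_eq_mul]
    rw [mul_comm (t : ℂ) I]
    ring
  rw [winding, hint, P.circleIntegral_derivative_div_eval zero_le_one hsphere]
  field_simp

theorem exists_pos_winding_eval_exp_I_mul {P : ℂ[X]} (h0 : P.eval 0 = 0)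
    (hP : ∀ t : ℝ, P.eval (exp (I * t)) ≠ 0) :
    ∃ k : ℤ, 0 < k ∧ winding (fun t : ℝ => P.eval (exp (I * t))) = k := by
  classical
  have hP0 : P ≠ 0 := fun h => hP 0 (by simp [h])
  refine ⟨_, ?_, by exact_mod_cast winding_eval_exp_I_mul P hP⟩
  exact_mod_cast Multiset.card_pos_iff_exists_mem.2
    ⟨0, Multiset.mem_filter.2 ⟨(mem_roots hP0).2 h0, mem_ball_self one_pos⟩⟩

end ArgumentPrinciple

section PolynomialFunctions

open MvPolynomial

/-- The real-linear coordinates `(z, w, z̄, w̄)` on `ℂ²`: `polyFun P` is `Z ↦ P(z, w, z̄, w̄)`. -/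
def conjCoord : Fin 4 → (ℂ × ℂ) →L[ℝ] ℂ :=
  ![.fst ℝ ℂ ℂ, .snd ℝ ℂ ℂ, conjCLE.toContinuousLinearMap ∘L .fst ℝ ℂ ℂ,
    conjCLE.toContinuousLinearMap ∘L .snd ℝ ℂ ℂ]

def polyFun (P : MvPolynomial (Fin 4) ℂ) (Z : ℂ × ℂ) : ℂ :=
  eval (fun i => conjCoord i Z) P

theorem fderiv_polyFun_apply (P : MvPolynomial (Fin 4) ℂ) (Z v : ℂ × ℂ) :
    fderiv ℝ (polyFun P) Z v = ∑ i, polyFun (pderiv i P) Z * conjCoord i v := by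
  have hP : HasFDerivAt (polyFun P) _ Z := P.hasFDerivAt_eval_comp conjCoord Z
  simp [hP.fderiv, polyFun]

theorem fderiv_polyFun_fst (P : MvPolynomial (Fin 4) ℂ) (Z : ℂ × ℂ) (a : ℂ) :
    fderiv ℝ (polyFun P) Z (a, 0)
      = polyFun (pderiv 0 P) Z * a + polyFun (pderiv 2 P) Z * starRingEnd ℂ a := by
  simp [fderiv_polyFun_apply, Fin.sum_univ_four, conjCoord]

theorem fderiv_polyFun_snd (P : MvPolynomial (Fin 4) ℂ) (Z : ℂ × ℂ) (a : ℂ) :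
    fderiv ℝ (polyFun P) Z (0, a)
      = polyFun (pderiv 1 P) Z * a + polyFun (pderiv 3 P) Z * starRingEnd ℂ a := by
  simp [fderiv_polyFun_apply, Fin.sum_univ_four, conjCoord]

theorem wdz_polyFun (P : MvPolynomial (Fin 4) ℂ) :
    wdz (polyFun P) = polyFun (pderiv 0 P) := by
  ext Z
  rw [wdz, fderiv_polyFun_fst, fderiv_polyFun_fst, map_one, conj_I]
  linear_combination (polyFun (pderiv 2 P) Z - polyFun (pderiv 0 P) Z) / 2 * I_sq

theorem wdw_polyFun (P : MvPolynomial (Fin 4) ℂ) :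
    wdw (polyFun P) = polyFun (pderiv 1 P) := by
  ext Z
  rw [wdw, fderiv_polyFun_snd, fderiv_polyFun_snd, map_one, conj_I]
  linear_combination (polyFun (pderiv 3 P) Z - polyFun (pderiv 1 P) Z) / 2 * I_sq

theorem wdzb_polyFun (P : MvPolynomial (Fin 4) ℂ) :
    wdzb (polyFun P) = polyFun (pderiv 2 P) := by
  ext Z
  rw [wdzb, fderiv_polyFun_fst, fderiv_polyFun_fst, map_one, conj_I]
  linear_combination (polyFun (pderiv 0 P) Z - polyFun (pderiv 2 P) Z) / 2 * I_sq

theorem wdwb_polyFun (P : MvPolynomial (Fin 4) ℂ) :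
    wdwb (polyFun P) = polyFun (pderiv 3 P) := by
  ext Z
  rw [wdwb, fderiv_polyFun_snd, fderiv_polyFun_snd, map_one, conj_I]
  linear_combination (polyFun (pderiv 1 P) Z - polyFun (pderiv 3 P) Z) / 2 * I_sq

def lbar0Poly : MvPolynomial (Fin 4) ℂ →ₗ[ℂ] MvPolynomial (Fin 4) ℂ :=
  (X 0 : MvPolynomial (Fin 4) ℂ) • (pderiv 3).toLinearMap
    - (X 1 : MvPolynomial (Fin 4) ℂ) • (pderiv 2).toLinearMap

/-- `R ↦ R_{Z²}(L₀, L₀) = w̄² R_zz - 2 z̄ w̄ R_zw + z̄² R_ww`, where `L₀ = -w̄ ∂_z + z̄ ∂_w`. -/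
def hessL0Poly : MvPolynomial (Fin 4) ℂ →ₗ[ℂ] MvPolynomial (Fin 4) ℂ :=
  (X 3 ^ 2 : MvPolynomial (Fin 4) ℂ) • ((pderiv 0).toLinearMap ∘ₗ (pderiv 0).toLinearMap)
    - (2 * X 2 * X 3 : MvPolynomial (Fin 4) ℂ) •
      ((pderiv 1).toLinearMap ∘ₗ (pderiv 0).toLinearMap)
    + (X 2 ^ 2 : MvPolynomial (Fin 4) ℂ) • ((pderiv 1).toLinearMap ∘ₗ (pderiv 1).toLinearMap)

def q0Poly : MvPolynomial (Fin 4) ℂ →ₗ[ℂ] MvPolynomial (Fin 4) ℂ :=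
  (lbar0Poly ^ 4) ∘ₗ hessL0Poly

theorem lbar0Poly_apply (P : MvPolynomial (Fin 4) ℂ) :
    lbar0Poly P = X 0 * pderiv 3 P - X 1 * pderiv 2 P := rfl

theorem hessL0Poly_apply (P : MvPolynomial (Fin 4) ℂ) :
    hessL0Poly P = X 3 ^ 2 * pderiv 0 (pderiv 0 P) - 2 * X 2 * X 3 * pderiv 1 (pderiv 0 P)
      + X 2 ^ 2 * pderiv 1 (pderiv 1 P) := rfl

theorem q0Poly_apply (P : MvPolynomial (Fin 4) ℂ) :
    q0Poly P = lbar0Poly (lbar0Poly (lbar0Poly (lbar0Poly (hessL0Poly P)))) := rfl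

theorem Lbar0_polyFun (P : MvPolynomial (Fin 4) ℂ) :
    Lbar0 (polyFun P) = polyFun (lbar0Poly P) := by
  ext Z
  simp only [Lbar0, wdzb_polyFun, wdwb_polyFun, lbar0Poly_apply, polyFun, conjCoord, map_sub,
    map_mul, eval_X, Fin.isValue, cons_val_zero, cons_val_one, ContinuousLinearMap.coe_fst',
    ContinuousLinearMap.coe_snd']
  ring

theorem iterate_Lbar0_polyFun (n : ℕ) (P : MvPolynomial (Fin 4) ℂ) :
    Lbar0^[n] (polyFun P) = polyFun ((lbar0Poly ^ n) P) := by
  induction n with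
  | zero => rfl
  | succ n ih =>
    rw [Function.iterate_succ_apply', ih, Lbar0_polyFun, pow_succ', Module.End.mul_apply]

theorem Q0_polyFun (P : MvPolynomial (Fin 4) ℂ) : Q0 (polyFun P) = polyFun (q0Poly P) := by
  rw [Q0, q0Poly, LinearMap.comp_apply, ← iterate_Lbar0_polyFun]
  congr 1
  ext Z
  simp [hessL0Poly_apply, wdz_polyFun, wdw_polyFun, polyFun, conjCoord]

theorem Q0_finset_sum {ι : Type*} (s : Finset ι) {R : ι → ℂ × ℂ → ℂ}
    (hR : ∀ i, ∃ P, R i = polyFun P) :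
    Q0 (fun Z => ∑ i ∈ s, R i Z) = fun Z => ∑ i ∈ s, Q0 (R i) Z := by
  choose P hP using hR
  have hsum : (fun Z => ∑ i ∈ s, R i Z) = polyFun (∑ i ∈ s, P i) := by
    ext Z
    simp [hP, polyFun]
  rw [hsum, Q0_polyFun]
  ext Z
  simp [hP, Q0_polyFun, polyFun]

/-- The weight of the circle action `Z ↦ e^{it} Z` on the variables `z, w, z̄, w̄`. -/
def circleWeight : Fin 4 → ℤ := ![1, 1, -1, -1]

def holWeight : Fin 4 → ℤ := ![1, 1, 0, 0]

theorem isWeightedHomogeneous_lbar0Poly {P : MvPolynomial (Fin 4) ℂ} {k : ℤ}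
    (h : IsWeightedHomogeneous circleWeight P k) :
    IsWeightedHomogeneous circleWeight (lbar0Poly P) (k + 2) := by
  have hX := isWeightedHomogeneous_X ℂ circleWeight
  have h3 : IsWeightedHomogeneous circleWeight (pderiv 3 P) (k + 1) :=
    h.pderiv (by simp [circleWeight])
  have h2 : IsWeightedHomogeneous circleWeight (pderiv 2 P) (k + 1) :=
    h.pderiv (by simp [circleWeight])
  rw [lbar0Poly_apply, show k + 2 = 1 + (k + 1) by ring]
  exact ((hX 0).mul h3).sub ((hX 1).mul h2)

theorem isWeightedHomogeneous_hessL0Poly {P : MvPolynomial (Fin 4) ℂ} {k : ℤ}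
    (h : IsWeightedHomogeneous circleWeight P k) :
    IsWeightedHomogeneous circleWeight (hessL0Poly P) (k - 4) := by
  have hX := isWeightedHomogeneous_X ℂ circleWeight
  have h0 : IsWeightedHomogeneous circleWeight (pderiv 0 P) (k - 1) :=
    h.pderiv (by simp [circleWeight])
  have h1 : IsWeightedHomogeneous circleWeight (pderiv 1 P) (k - 1) :=
    h.pderiv (by simp [circleWeight])
  have h00 : IsWeightedHomogeneous circleWeight (pderiv 0 (pderiv 0 P)) (k - 1 - 1) :=
    h0.pderiv (by simp [circleWeight])
  have h10 : IsWeightedHomogeneous circleWeight (pderiv 1 (pderiv 0 P)) (k - 1 - 1) :=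
    h0.pderiv (by simp [circleWeight])
  have h11 : IsWeightedHomogeneous circleWeight (pderiv 1 (pderiv 1 P)) (k - 1 - 1) :=
    h1.pderiv (by simp [circleWeight])
  have h2 : IsWeightedHomogeneous circleWeight (2 : MvPolynomial (Fin 4) ℂ) 0 :=
    isWeightedHomogeneous_C circleWeight 2
  rw [hessL0Poly_apply, show k - 4 = 2 • (-1) + (k - 1 - 1) by ring]
  exact ((((hX 3).pow 2).mul h00).sub (((h2.mul (hX 2)).mul (hX 3)).mul h10)).add
    (((hX 2).pow 2).mul h11)

theorem isWeightedHomogeneous_q0Poly {P : MvPolynomial (Fin 4) ℂ} {k : ℤ}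
    (h : IsWeightedHomogeneous circleWeight P k) :
    IsWeightedHomogeneous circleWeight (q0Poly P) (k + 4) := by
  rw [q0Poly_apply]
  convert isWeightedHomogeneous_lbar0Poly (isWeightedHomogeneous_lbar0Poly
    (isWeightedHomogeneous_lbar0Poly (isWeightedHomogeneous_lbar0Poly
      (isWeightedHomogeneous_hessL0Poly h)))) using 1
  ring

theorem hessL0Poly_eq_zero {P : MvPolynomial (Fin 4) ℂ} {k : ℤ}
    (h : IsWeightedHomogeneous holWeight P k) (hk : k ≤ 1) : hessL0Poly P = 0 := by
  have hw : ∀ i, 0 ≤ holWeight i := by decide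
  have h0 : IsWeightedHomogeneous holWeight (pderiv 0 P) (k - 1) :=
    h.pderiv (by simp [holWeight])
  have h1 : IsWeightedHomogeneous holWeight (pderiv 1 P) (k - 1) :=
    h.pderiv (by simp [holWeight])
  have h00 := (h0.pderiv (i := 0) (n' := k - 1 - 1) (by simp [holWeight])).eq_zero_of_neg hw
    (by omega)
  have h10 := (h0.pderiv (i := 1) (n' := k - 1 - 1) (by simp [holWeight])).eq_zero_of_neg hw
    (by omega)
  have h11 := (h1.pderiv (i := 1) (n' := k - 1 - 1) (by simp [holWeight])).eq_zero_of_neg hw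
    (by omega)
  simp [hessL0Poly_apply, h00, h10, h11]

theorem polyFun_smul {P : MvPolynomial (Fin 4) ℂ} {k : ℤ}
    (h : IsWeightedHomogeneous circleWeight P k) {e : ℂ} (he : ‖e‖ = 1) (Z : ℂ × ℂ) :
    polyFun P (e * Z.1, e * Z.2) = e ^ k * polyFun P Z := by
  have he0 : e ≠ 0 := by
    rintro rfl
    simp at he
  have hcoord : (fun i => conjCoord i (e * Z.1, e * Z.2))
      = fun i => e ^ circleWeight i * conjCoord i Z := by
    ext i
    fin_cases i <;> simp [conjCoord, circleWeight, ← inv_eq_conj he]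
  rw [polyFun, hcoord, h.eval_zpow_mul he0, polyFun]

def bihomPoly (p q : ℕ) (c : Fin (p + 1) → Fin (q + 1) → ℂ) : MvPolynomial (Fin 4) ℂ :=
  ∑ a : Fin (p + 1), ∑ b : Fin (q + 1),
    C (c a b) * X 0 ^ (a : ℕ) * X 1 ^ (p - a) * X 2 ^ (b : ℕ) * X 3 ^ (q - b)

theorem isWeightedHomogeneous_bihomPoly (p q : ℕ) (c : Fin (p + 1) → Fin (q + 1) → ℂ)
    {w : Fin 4 → ℤ} (hw01 : w 0 = w 1) (hw23 : w 2 = w 3) :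
    IsWeightedHomogeneous w (bihomPoly p q c) (p * w 0 + q * w 2) := by
  refine .sum _ _ _ fun a _ => .sum _ _ _ fun b _ => ?_
  have hX := isWeightedHomogeneous_X ℂ w
  have ha : (a : ℕ) ≤ p := Nat.lt_succ_iff.1 a.2
  have hb : (b : ℕ) ≤ q := Nat.lt_succ_iff.1 b.2
  convert (((((isWeightedHomogeneous_C w (c a b)).mul ((hX 0).pow a)).mul
    ((hX 1).pow (p - a))).mul ((hX 2).pow b)).mul ((hX 3).pow (q - b))) using 1
  simp only [nsmul_eq_mul]
  push_cast [Nat.cast_sub ha, Nat.cast_sub hb]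
  rw [hw01, hw23]
  ring

theorem IsBihom.exists_polyFun_eq {R : ℂ × ℂ → ℂ} {p q : ℕ} (h : IsBihom R p q) :
    ∃ P, R = polyFun P ∧ IsWeightedHomogeneous circleWeight P (p - q) ∧
      IsWeightedHomogeneous holWeight P p := by
  obtain ⟨c, hc⟩ := h
  refine ⟨bihomPoly p q c, ?_, ?_, ?_⟩
  · ext ⟨z, w⟩
    simp [hc, bihomPoly, polyFun, conjCoord]
  · simpa [circleWeight, sub_eq_add_neg] using
      isWeightedHomogeneous_bihomPoly p q c (w := circleWeight) rfl rfl
  · simpa [holWeight] using isWeightedHomogeneous_bihomPoly p q c (w := holWeight) rfl rfl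

theorem IsBihom.Q0_apply_smul {R : ℂ × ℂ → ℂ} {p q : ℕ} (h : IsBihom R p q) {e : ℂ}
    (he : ‖e‖ = 1) (Z : ℂ × ℂ) :
    Q0 R (e * Z.1, e * Z.2) = e ^ ((p : ℤ) - q + 4) * Q0 R Z := by
  obtain ⟨P, rfl, hP, -⟩ := h.exists_polyFun_eq
  rw [Q0_polyFun]
  exact polyFun_smul (isWeightedHomogeneous_q0Poly hP) he Z

theorem IsBihom.Q0_eq_zero {R : ℂ × ℂ → ℂ} {p q : ℕ} (h : IsBihom R p q) (hp : p ≤ 1) :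
    Q0 R = 0 := by
  obtain ⟨P, rfl, -, hP⟩ := h.exists_polyFun_eq
  ext Z
  simp [Q0_polyFun, q0Poly_apply, hessL0Poly_eq_zero hP (by omega), polyFun]

end PolynomialFunctions

open Polynomial in
theorem exists_polynomial_eval_eq_Q0 {m : ℕ} {ρ' : ℂ × ℂ → ℂ} {f : ℕ → ℕ → ℂ × ℂ → ℂ}
    (hbihom : ∀ p q, IsBihom (f p q) p q)
    (hdecomp : ∀ Z, ρ' Z = ∑ p ∈ Finset.range (m + 1), ∑ q ∈ Finset.range (m + 1), f p q Z)
    (hvan : ∀ p q : ℕ, 2 ≤ p → p + 4 ≤ q → ∀ Z, Q0 (f p q) Z = 0) (Z₀ : ℂ × ℂ) :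
    ∃ F : ℂ[X], F.eval 0 = 0 ∧ ∀ e : ℂ, ‖e‖ = 1 → Q0 ρ' (e * Z₀.1, e * Z₀.2) = F.eval e := by
  have hQ0 : ∀ p q, p + 4 ≤ q → Q0 (f p q) = 0 := fun p q hpq => by
    rcases le_or_gt 2 p with hp | hp
    · exact funext (hvan p q hp hpq)
    · exact (hbihom p q).Q0_eq_zero (by omega)
  set s := Finset.range (m + 1) ×ˢ Finset.range (m + 1)
  have hρ : ρ' = fun Z => ∑ x ∈ s, f x.1 x.2 Z := funext fun Z => by
    rw [hdecomp, Finset.sum_product]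
  refine ⟨∑ x ∈ s, C (Q0 (f x.1 x.2) Z₀) * X ^ (x.1 + 4 - x.2), ?_, fun e he => ?_⟩
  · simp only [eval_finsetSum, eval_mul, eval_C, eval_pow, eval_X]
    refine Finset.sum_eq_zero fun ⟨p, q⟩ _ => ?_
    by_cases hpq : p + 4 ≤ q
    · simp [hQ0 p q hpq]
    · simp [show p + 4 - q ≠ 0 by omega]
  rw [hρ, Q0_finset_sum (R := fun x => f x.1 x.2) s fun x =>
    (hbihom x.1 x.2).exists_polyFun_eq.imp fun _ h => h.1]
  simp only [eval_finsetSum, eval_mul, eval_C, eval_pow, eval_X]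
  refine Finset.sum_congr rfl fun ⟨p, q⟩ _ => ?_
  by_cases hpq : p + 4 ≤ q
  · simp [hQ0 p q hpq]
  · rw [(hbihom p q).Q0_apply_smul he, show (p : ℤ) - q + 4 = (p + 4 - q : ℕ) by omega,
      zpow_natCast, mul_comm]

theorem Q0_winding_positive_general (m : ℕ) (ρ' : ℂ × ℂ → ℂ) (f : ℕ → ℕ → (ℂ × ℂ → ℂ))
    (hbihom : ∀ p q, IsBihom (f p q) p q)
    (hdecomp : ∀ Z, ρ' Z = ∑ p ∈ Finset.range (m + 1), ∑ q ∈ Finset.range (m + 1), f p q Z)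
    (hvan : ∀ p q : ℕ, 2 ≤ p → p + 4 ≤ q → ∀ Z, Q0 (f p q) Z = 0)
    (Z₀ : ℂ × ℂ)
    (hg : ∀ t : ℝ,
      Q0 ρ' (Complex.exp (Complex.I * (t : ℂ)) * Z₀.1,
        Complex.exp (Complex.I * (t : ℂ)) * Z₀.2) ≠ 0) :
    ∃ k : ℤ, 0 < k ∧
      winding (fun t : ℝ => Q0 ρ' (Complex.exp (Complex.I * (t : ℂ)) * Z₀.1,
        Complex.exp (Complex.I * (t : ℂ)) * Z₀.2)) = (k : ℂ) := by
  obtain ⟨F, hF0, hF⟩ := exists_polynomial_eval_eq_Q0 hbihom hdecomp hvan Z₀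
  simp only [hF _ (norm_exp_I_mul_ofReal _)] at hg ⊢
  exact exists_pos_winding_eval_exp_I_mul hF0 hg

/-- **Key step in Proposition 5.4**: let `ρ'` be a real-valued polynomial with bidegree
decomposition `ρ' = Σ ρ'_{p,q}` such that `Q⁰(ρ'_{p,q}) = 0` whenever `p ≥ 2` and
`q ≥ p + 4`. If `Z₀ ∈ S³` is such that the loop `t ↦ Q⁰(ρ')(e^{it} Z₀)` never vanishes, then
its winding number about `0` is a strictly positive integer. -/
theorem Q0_winding_positive (m : ℕ) (ρ' : ℂ × ℂ → ℂ) (f : ℕ → ℕ → (ℂ × ℂ → ℂ))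
    (hbihom : ∀ p q, IsBihom (f p q) p q)
    (hreal : ∀ p q Z, f q p Z = starRingEnd ℂ (f p q Z))
    (hdecomp : ∀ Z, ρ' Z = ∑ p ∈ Finset.range (m + 1), ∑ q ∈ Finset.range (m + 1), f p q Z)
    (hvan : ∀ p q : ℕ, 2 ≤ p → p + 4 ≤ q → ∀ Z, Q0 (f p q) Z = 0)
    (Z₀ : ℂ × ℂ) (hZ₀ : ‖Z₀.1‖ ^ 2 + ‖Z₀.2‖ ^ 2 = 1)
    (hg : ∀ t : ℝ,
      Q0 ρ' (Complex.exp (Complex.I * (t : ℂ)) * Z₀.1,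
        Complex.exp (Complex.I * (t : ℂ)) * Z₀.2) ≠ 0) :
    ∃ k : ℤ, 0 < k ∧
      winding (fun t : ℝ => Q0 ρ' (Complex.exp (Complex.I * (t : ℂ)) * Z₀.1,
        Complex.exp (Complex.I * (t : ℂ)) * Z₀.2)) = (k : ℂ) :=
  Q0_winding_positive_general m ρ' f hbihom hdecomp hvan Z₀ hg
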